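/- arXiv:1206.1935 — 2 statements merged into one kernel-verified Lean document; each statement's English description precedes it below -/
import Mathlib

section
/- Let F be a super-operator on ℂ^d and ρ_0 a positive semidefinite d×d complex matrix. If F^n(ρ_0) = 0 for some positive integer n (where F^n is the n-fold composition of F), then F^d(ρ_0) = 0. -/
/-!
For positive semidefinite `ρ`, the kernel of `F(ρ) = ∑ Fᵢ ρ Fᵢᴴ` is `{x | Fᵢᴴ x ∈ ker ρ for all i}`,
so `ker Fᵏ(ρ₀) = Tᵏ (ker ρ₀)` for the monotone, meet-preserving map `T K = ⋂ᵢ (Fᵢᴴ)⁻¹ K`.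
The meet `W = ⋂ₖ ker Fᵏ(ρ₀)` satisfies `W ≤ T W`, so `W ≤ T W ≤ T² W ≤ ⋯` is an increasing chain
of subspaces of `ℂᵈ` which is everything at step `N`. Once such a chain stalls it is constant,
so it cannot stall before reaching `ℂᵈ`, and hence gets there within `d` steps.
Finally `T^d W ≤ T^d (ker ρ₀) = ker F^d(ρ₀)`.
-/

open Matrix
open scoped ComplexOrder

/-- The super-operator with Kraus operators `F i`, applied to `ρ`:
`F(ρ) = ∑ i, F i * ρ * (F i)ᴴ`. -/
noncomputable def superApply {d n : ℕ} (F : Fin n → Matrix (Fin d) (Fin d) ℂ)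
    (ρ : Matrix (Fin d) (Fin d) ℂ) : Matrix (Fin d) (Fin d) ℂ :=
  ∑ i, F i * ρ * (F i)ᴴ

open Module in
theorem Submodule.iterate_finrank_eq_top_of_iterate_eq_top {K V : Type*} [DivisionRing K]
    [AddCommGroup V] [Module K V] [FiniteDimensional K V] {T : Submodule K V → Submodule K V}
    (hT : Monotone T) {W : Submodule K V} (hW : W ≤ T W) {N : ℕ} (hN : T^[N] W = ⊤) :
    T^[finrank K V] W = ⊤ := by
  set U : ℕ → Submodule K V := fun k => T^[k] W
  have hU : Monotone U := monotone_nat_of_le_succ fun k => by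
    simpa only [U, Function.iterate_succ_apply] using hT.iterate k hW
  have stall : ∀ k, U (k + 1) = U k → U k = ⊤ := fun k hk => by
    have hfix : T (U k) = U k := by rwa [← Function.iterate_succ_apply' T]
    refine top_unique ?_
    calc ⊤ = U N := hN.symm
      _ ≤ U (N + k) := hU (Nat.le_add_right N k)
      _ = U k := by
        show T^[N + k] W = T^[k] W
        rw [Function.iterate_add_apply]
        exact Function.iterate_fixed hfix N
  by_contra hd
  have grow : ∀ k ≤ finrank K V, k ≤ finrank K (U k) := by
    intro k
    induction k with
    | zero => exact fun _ => Nat.zero_le _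
    | succ k ih =>
      intro hk
      have hlt : U k < U (k + 1) := (hU k.le_succ).lt_of_ne fun h =>
        hd (top_unique ((stall k h.symm).ge.trans (hU (by omega))))
      exact (ih (by omega)).trans_lt (Submodule.finrank_lt_finrank_of_lt hlt)
  exact hd (Submodule.eq_top_of_finrank_eq ((Submodule.finrank_le _).antisymm (grow _ le_rfl)))

section
variable {d n : ℕ} (F : Fin n → Matrix (Fin d) (Fin d) ℂ)

def superComap (K : Submodule ℂ (Fin d → ℂ)) : Submodule ℂ (Fin d → ℂ) :=
  ⨅ i, K.comap (F i)ᴴ.mulVecLin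

lemma superComap_mono : Monotone (superComap F) :=
  fun _ _ h => iInf_mono fun _ => Submodule.comap_mono h

lemma superComap_iInf {ι : Type*} (K : ι → Submodule ℂ (Fin d → ℂ)) :
    superComap F (⨅ j, K j) = ⨅ j, superComap F (K j) := by
  simp only [superComap, Submodule.comap_iInf]
  exact iInf_comm

lemma iterate_superComap_iInf {ι : Type*} (K : ι → Submodule ℂ (Fin d → ℂ)) (k : ℕ) :
    (superComap F)^[k] (⨅ j, K j) = ⨅ j, (superComap F)^[k] (K j) := by
  induction k with
  | zero => rfl
  | succ k ih => simp only [Function.iterate_succ_apply', ih, superComap_iInf]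

lemma superApply_zero : superApply F 0 = 0 := by simp [superApply]

lemma posSemidef_superApply {ρ : Matrix (Fin d) (Fin d) ℂ} (hρ : ρ.PosSemidef) :
    (superApply F ρ).PosSemidef :=
  posSemidef_sum _ fun i _ => hρ.mul_mul_conjTranspose_same (F i)

lemma posSemidef_iterate_superApply {ρ : Matrix (Fin d) (Fin d) ℂ} (hρ : ρ.PosSemidef) (k : ℕ) :
    ((superApply F)^[k] ρ).PosSemidef := by
  induction k with
  | zero => exact hρ
  | succ k ih => rw [Function.iterate_succ_apply']; exact posSemidef_superApply F ih

lemma ker_superApply {ρ : Matrix (Fin d) (Fin d) ℂ} (hρ : ρ.PosSemidef) :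
    LinearMap.ker (superApply F ρ).mulVecLin = superComap F (LinearMap.ker ρ.mulVecLin) := by
  ext x
  simp only [LinearMap.mem_ker, mulVecLin_apply, superComap, Submodule.mem_iInf,
    Submodule.mem_comap]
  have hquad : star x ⬝ᵥ superApply F ρ *ᵥ x
      = ∑ i, star ((F i)ᴴ *ᵥ x) ⬝ᵥ ρ *ᵥ (F i)ᴴ *ᵥ x := by
    simp only [superApply, sum_mulVec, dotProduct_sum, ← mulVec_mulVec,
      dotProduct_mulVec (star x), star_mulVec, conjTranspose_conjTranspose]
  rw [← (posSemidef_superApply F hρ).dotProduct_mulVec_zero_iff, hquad,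
    Finset.sum_eq_zero_iff_of_nonneg fun i _ => hρ.dotProduct_mulVec_nonneg _]
  simp only [Finset.mem_univ, true_implies, hρ.dotProduct_mulVec_zero_iff]

lemma ker_iterate_superApply {ρ : Matrix (Fin d) (Fin d) ℂ} (hρ : ρ.PosSemidef) (k : ℕ) :
    LinearMap.ker ((superApply F)^[k] ρ).mulVecLin
      = (superComap F)^[k] (LinearMap.ker ρ.mulVecLin) := by
  induction k with
  | zero => rfl
  | succ k ih =>
    rw [Function.iterate_succ_apply', Function.iterate_succ_apply',
      ker_superApply F (posSemidef_iterate_superApply F hρ k), ih]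
end

theorem terminates_within_dim_general {d n : ℕ}
    (F : Fin n → Matrix (Fin d) (Fin d) ℂ)
    (ρ₀ : Matrix (Fin d) (Fin d) ℂ) (hρ₀ : ρ₀.PosSemidef)
    (N : ℕ) (h : (superApply F)^[N] ρ₀ = 0) :
    (superApply F)^[d] ρ₀ = 0 := by
  let K : ℕ → Submodule ℂ (Fin d → ℂ) := fun k =>
    LinearMap.ker ((superApply F)^[k] ρ₀).mulVecLin
  have hK : ∀ k, K k = (superComap F)^[k] (K 0) := ker_iterate_superApply F hρ₀
  have hW : ⨅ k, K k ≤ superComap F (⨅ k, K k) := by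
    rw [superComap_iInf]
    exact le_iInf fun k =>
      (iInf_le K (k + 1)).trans_eq (by rw [hK, hK k, Function.iterate_succ_apply'])
  have hN : (superComap F)^[N] (⨅ k, K k) = ⊤ := by
    rw [iterate_superComap_iInf, iInf_eq_top]
    intro k
    rw [hK k, ← Function.iterate_add_apply, ← hK]
    change LinearMap.ker _ = ⊤
    rw [add_comm, Function.iterate_add_apply, h, Function.iterate_fixed (superApply_zero F),
      mulVecLin_zero, LinearMap.ker_zero]
  have hKd : LinearMap.ker ((superApply F)^[d] ρ₀).mulVecLin = ⊤ := top_unique <|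
    calc ⊤ = (superComap F)^[d] (⨅ k, K k) := by
          simpa only [Module.finrank_fin_fun] using
            (Submodule.iterate_finrank_eq_top_of_iterate_eq_top (superComap_mono F) hW hN).symm
      _ ≤ (superComap F)^[d] (K 0) := (superComap_mono F).iterate d (iInf_le K 0)
      _ = K d := (hK d).symm
  rwa [← toLin'_apply', LinearMap.ker_eq_top, LinearEquiv.map_eq_zero_iff] at hKd

theorem terminates_within_dim {d n : ℕ}
    (F : Fin n → Matrix (Fin d) (Fin d) ℂ)
    (hF : (1 - ∑ i, (F i)ᴴ * F i).PosSemidef)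
    (ρ₀ : Matrix (Fin d) (Fin d) ℂ) (hρ₀ : ρ₀.PosSemidef)
    (N : ℕ) (hN : 0 < N) (h : (superApply F)^[N] ρ₀ = 0) :
    (superApply F)^[d] ρ₀ = 0 :=
  terminates_within_dim_general F ρ₀ hρ₀ N h
end

section
/- Let F be a super-operator on ℂ^d and n a positive integer. Then the termination set X_n = { |ψ⟩ ∈ ℂ^d : F^n(|ψ⟩⟨ψ|) = 0 } is a linear subspace of ℂ^d; that is, if |φ⟩, |χ⟩ ∈ X_n and α, β ∈ ℂ, then α|φ⟩ + β|χ⟩ ∈ X_n. -/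
open Matrix
open scoped ComplexOrder

/-!
For a linear map `Φ` preserving positive semidefiniteness and vectors `a`, `b` with
`Φ |a⟩⟨a| = Φ |b⟩⟨b| = 0`, the matrix `Φ |a + t b⟩⟨a + t b| = t̄ Φ |a⟩⟨b| + t Φ |b⟩⟨a|` is
positive semidefinite for every `t : ℂ` and odd in `t`, hence zero. Taking `t = 1` and `t = i`
gives `Φ |a⟩⟨b| = 0`, so `Φ` kills every term of the expansion of `|α a + β b⟩⟨α a + β b|`.
The map `F^N` is such a `Φ`, since each Kraus term `ρ ↦ F i ρ (F i)ᴴ` preserves positivity.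
-/

open scoped MatrixOrder

section PositiveMap

variable {ι κ R : Type*}

lemma vecMulVec_add_star_add [NonUnitalNonAssocSemiring R] [StarAddMonoid R] (a b : ι → R) :
    vecMulVec (a + b) (star (a + b)) = vecMulVec a (star a) + vecMulVec a (star b) +
      (vecMulVec b (star a) + vecMulVec b (star b)) := by
  rw [star_add, add_vecMulVec, vecMulVec_add, vecMulVec_add]

lemma vecMulVec_smul_star_smul [CommSemiring R] [StarRing R] (c : R) (a b : ι → R) :
    vecMulVec (c • a) (star (c • b)) = (c * star c) • vecMulVec a (star b) := by
  rw [star_smul, smul_vecMulVec, vecMulVec_smul, smul_smul]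

variable [Fintype ι] [Fintype κ] (Φ : Matrix ι ι ℂ →ₗ[ℂ] Matrix κ κ ℂ)

lemma LinearMap.map_vecMulVec_star_eq_zero
    (hΦ : ∀ A : Matrix ι ι ℂ, A.PosSemidef → (Φ A).PosSemidef) {a b : ι → ℂ}
    (ha : Φ (vecMulVec a (star a)) = 0) (hb : Φ (vecMulVec b (star b)) = 0) :
    Φ (vecMulVec a (star b)) = 0 := by
  set X := Φ (vecMulVec a (star b))
  set Y := Φ (vecMulVec b (star a))
  have hline (t : ℂ) : Φ (vecMulVec (a + t • b) (star (a + t • b))) = star t • X + t • Y := by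
    simp only [vecMulVec_add_star_add, star_smul, vecMulVec_smul, smul_vecMulVec, map_add,
      map_smul, ha, hb, X, Y, smul_smul, smul_zero, zero_add, add_zero]
  have hzero (t : ℂ) : star t • X + t • Y = 0 := by
    refine le_antisymm ?_ ((hline t) ▸ (hΦ _ (posSemidef_vecMulVec_self_star _)).nonneg)
    have := (hΦ _ (posSemidef_vecMulVec_self_star (a + (-t) • b))).nonneg
    rwa [hline, star_neg, neg_smul, neg_smul, ← neg_add, neg_nonneg] at this
  have hsum : X + Y = 0 := by simpa using hzero 1
  have hdiff : X = Y := by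
    have := hzero Complex.I
    rw [Complex.star_def, Complex.conj_I, neg_smul, neg_add_eq_zero] at this
    exact smul_right_injective _ Complex.I_ne_zero this
  rw [← hdiff, ← two_smul ℂ] at hsum
  exact (smul_eq_zero.mp hsum).resolve_left two_ne_zero

def terminationSubspace (hΦ : ∀ A : Matrix ι ι ℂ, A.PosSemidef → (Φ A).PosSemidef) :
    Submodule ℂ (ι → ℂ) where
  carrier := {ψ | Φ (vecMulVec ψ (star ψ)) = 0}
  zero_mem' := by simp
  add_mem' {a b} (ha : Φ _ = 0) (hb : Φ _ = 0) := by
    change Φ _ = 0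
    rw [vecMulVec_add_star_add, map_add, map_add, map_add, ha, hb,
      Φ.map_vecMulVec_star_eq_zero hΦ ha hb, Φ.map_vecMulVec_star_eq_zero hΦ hb ha]
    simp
  smul_mem' c ψ (hψ : Φ _ = 0) := by
    change Φ _ = 0
    rw [vecMulVec_smul_star_smul, map_smul, hψ, smul_zero]

end PositiveMap

section SuperOperator

variable {d n : ℕ} (F : Fin n → Matrix (Fin d) (Fin d) ℂ)

noncomputable def superApplyₗ : Module.End ℂ (Matrix (Fin d) (Fin d) ℂ) where
  toFun := superApply F
  map_add' A B := by simp [superApply, mul_add, add_mul, Finset.sum_add_distrib]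
  map_smul' c A := by simp [superApply, Finset.smul_sum]

lemma superApply_iterate_eq_pow (N : ℕ) : (superApply F)^[N] = ⇑(superApplyₗ F ^ N) :=
  (Module.End.coe_pow (superApplyₗ F) N).symm

lemma superApply_posSemidef {A : Matrix (Fin d) (Fin d) ℂ} (hA : A.PosSemidef) :
    (superApply F A).PosSemidef :=
  posSemidef_sum _ fun i _ => hA.mul_mul_conjTranspose_same (F i)

lemma superApplyₗ_pow_posSemidef (N : ℕ) {A : Matrix (Fin d) (Fin d) ℂ} (hA : A.PosSemidef) :
    ((superApplyₗ F ^ N) A).PosSemidef := by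
  rw [Module.End.pow_apply]
  induction N generalizing A with
  | zero => exact hA
  | succ N ih => exact ih (superApply_posSemidef F hA)

end SuperOperator

theorem termination_set_subspace_general {d n : ℕ}
    (F : Fin n → Matrix (Fin d) (Fin d) ℂ)
    (N : ℕ)
    (φ χ : Fin d → ℂ) (α β : ℂ)
    (hφ : (superApply F)^[N] (Matrix.vecMulVec φ (star φ)) = 0)
    (hχ : (superApply F)^[N] (Matrix.vecMulVec χ (star χ)) = 0) :
    (superApply F)^[N]
      (Matrix.vecMulVec (α • φ + β • χ) (star (α • φ + β • χ))) = 0 := by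
  rw [superApply_iterate_eq_pow] at hφ hχ ⊢
  let X := terminationSubspace _ fun _ => superApplyₗ_pow_posSemidef F N
  exact X.add_mem (X.smul_mem α hφ) (X.smul_mem β hχ)

/-- The termination set `X_N` is closed under linear combinations, i.e. it is a
linear subspace of `ℂ^d`.  Here `vecMulVec ψ (star ψ)` is the rank-one matrix
`|ψ⟩⟨ψ|`. -/
theorem termination_set_subspace {d n : ℕ}
    (F : Fin n → Matrix (Fin d) (Fin d) ℂ)
    (hF : (1 - ∑ i, (F i)ᴴ * F i).PosSemidef)
    (N : ℕ) (hN : 0 < N)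
    (φ χ : Fin d → ℂ) (α β : ℂ)
    (hφ : (superApply F)^[N] (Matrix.vecMulVec φ (star φ)) = 0)
    (hχ : (superApply F)^[N] (Matrix.vecMulVec χ (star χ)) = 0) :
    (superApply F)^[N]
      (Matrix.vecMulVec (α • φ + β • χ) (star (α • φ + β • χ))) = 0 :=
  termination_set_subspace_general F N φ χ α β hφ hχ
end
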